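/- (Differentiating through the argmin, Lemma 1 of the paper.) Let g : ℝ^m × ℝ^n → ℝ be twice continuously differentiable and let θ̂ : ℝ^m → ℝ^n be a differentiable map such that for every η ∈ ℝ^m one has ∇_θ g(η, θ̂(η)) = 0 (in particular this holds when θ̂(η) is a minimiser of g(η, ·)). Suppose that at a point η ∈ ℝ^m the Hessian ∇²_θ g(η, θ̂(η)) is invertible. Then for every i ∈ {1,…,m}, ∂θ̂/∂η_i (η) = −(∇²_θ g(η, θ̂(η)))⁻¹ · ∂/∂η_i [∇_θ g(η, θ)]|_{θ = θ̂(η)}. -/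

import Mathlib

/-!
Differentiating the identity `∇_θ g(η, θ̂ η) = 0` by the chain rule, the zero total derivative splits
as `∇²_θ g ∘ Dθ̂ + ∂_η ∇_θ g = 0`; composing on the left with the inverse of the Hessian solves for `Dθ̂`.
-/

open Filter Topology InnerProductSpace

section ImplicitDerivative

variable {𝕜 E F G : Type*} [NontriviallyNormedField 𝕜]
  [NormedAddCommGroup E] [NormedSpace 𝕜 E] [NormedAddCommGroup F] [NormedSpace 𝕜 F]
  [NormedAddCommGroup G] [NormedSpace 𝕜 G]

theorem fderiv_partial_right_comp_add_fderiv_partial_left_eq_zero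
    {Φ : E × F → G} {f : E → F} {x : E}
    (hΦ : DifferentiableAt 𝕜 Φ (x, f x)) (hf : DifferentiableAt 𝕜 f x)
    (hzero : ∀ᶠ y in 𝓝 x, Φ (y, f y) = 0) :
    (fderiv 𝕜 (fun z => Φ (x, z)) (f x)).comp (fderiv 𝕜 f x)
      + fderiv 𝕜 (fun y => Φ (y, f x)) x = 0 := by
  set L := fderiv 𝕜 Φ (x, f x)
  have hright : fderiv 𝕜 (fun z => Φ (x, z)) (f x) = L.comp (.inr 𝕜 E F) :=
    (hΦ.hasFDerivAt.comp (f x) (hasFDerivAt_prodMk_right x (f x))).fderiv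
  have hleft : fderiv 𝕜 (fun y => Φ (y, f x)) x = L.comp (.inl 𝕜 E F) :=
    (hΦ.hasFDerivAt.comp x (hasFDerivAt_prodMk_left x (f x))).fderiv
  have hchain : HasFDerivAt (fun y => Φ (y, f y))
      (L.comp ((ContinuousLinearMap.id 𝕜 E).prod (fderiv 𝕜 f x))) x :=
    hΦ.hasFDerivAt.comp x ((hasFDerivAt_id x).prodMk hf.hasFDerivAt)
  have hconst : HasFDerivAt (fun y => Φ (y, f y)) (0 : E →L[𝕜] G) x :=
    (hasFDerivAt_const 0 x).congr_of_eventuallyEq hzero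
  rw [hright, hleft, ← hchain.unique hconst]
  ext v
  simp [← map_add, add_comm]

theorem eq_neg_inverse_comp_of_comp_add_eq_zero {H : F →L[𝕜] F} (hH : IsUnit H)
    {T A : E →L[𝕜] F} (h : H.comp T + A = 0) : T = -(Ring.inverse H).comp A :=
  calc T = (Ring.inverse H * H).comp T := by
        rw [Ring.inverse_mul_cancel H hH, ContinuousLinearMap.one_def, ContinuousLinearMap.id_comp]
    _ = -(Ring.inverse H).comp A := by
        rw [ContinuousLinearMap.mul_def, ContinuousLinearMap.comp_assoc,
          eq_neg_of_add_eq_zero_left h, ContinuousLinearMap.comp_neg]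

end ImplicitDerivative

protected theorem ContDiff.gradient {E F : Type*} [NormedAddCommGroup E] [NormedSpace ℝ E]
    [NormedAddCommGroup F] [InnerProductSpace ℝ F] [CompleteSpace F]
    {f : E → F → ℝ} {h : E → F} {k l : WithTop ℕ∞}
    (hf : ContDiff ℝ k (Function.uncurry f)) (hh : ContDiff ℝ l h) (hlk : l + 1 ≤ k) :
    ContDiff ℝ l fun x => gradient (f x) (h x) :=
  (toDual ℝ F).symm.toContinuousLinearEquiv.contDiff.comp (hf.fderiv hh hlk)

/-- Lemma 1 of the paper (differentiating through the argmin): if ∇_θ g(η, θ̂(η)) = 0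
for all η and the Hessian ∇²_θ g(η, θ̂(η)) is invertible at a point η, then
∂θ̂/∂η_i (η) = −(∇²_θ g(η, θ̂(η)))⁻¹ · ∂/∂η_i [∇_θ g(η, θ)]|_{θ = θ̂(η)}. -/
theorem argmin_differentiation
    (m n : ℕ)
    (g : EuclideanSpace ℝ (Fin m) → EuclideanSpace ℝ (Fin n) → ℝ)
    (hg : ContDiff ℝ 2 (Function.uncurry g))
    (θhat : EuclideanSpace ℝ (Fin m) → EuclideanSpace ℝ (Fin n))
    (hθhat : Differentiable ℝ θhat)
    (hstat : ∀ η, gradient (g η) (θhat η) = 0)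
    (η : EuclideanSpace ℝ (Fin m))
    (hH : IsUnit (fderiv ℝ (fun θ => gradient (g η) θ) (θhat η)))
    (i : Fin m) :
    fderiv ℝ θhat η (EuclideanSpace.single i (1 : ℝ))
      = -(Ring.inverse (fderiv ℝ (fun θ => gradient (g η) θ) (θhat η)))
          (fderiv ℝ (fun η' => gradient (g η') (θhat η)) η
            (EuclideanSpace.single i (1 : ℝ))) := by
  have hg' : ContDiff ℝ 2 (Function.uncurry fun p : EuclideanSpace ℝ (Fin m) ×
      EuclideanSpace ℝ (Fin n) => g p.1) :=
    hg.comp (contDiff_fst.fst.prodMk contDiff_snd)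
  have hgrad : Differentiable ℝ fun p : EuclideanSpace ℝ (Fin m) × EuclideanSpace ℝ (Fin n) =>
      gradient (g p.1) p.2 :=
    (hg'.gradient contDiff_snd (l := 1) le_rfl).differentiable one_ne_zero
  have hlin := fderiv_partial_right_comp_add_fderiv_partial_left_eq_zero
    (hgrad (η, θhat η)) (hθhat η) (.of_forall hstat)
  rw [eq_neg_inverse_comp_of_comp_add_eq_zero hH hlin]
  rfl
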